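/- Assume the project is PCL-indexable, i.e., conditions (PCLI1), (PCLI2) and (PCLI3) hold. Then for every initial distribution p on ℝ with ∫ w dp < ∞ and every state x, the functions z ↦ F(p,z) and z ↦ f(x,z) have bounded variation on ℝ. -/

import Mathlib

open MeasureTheory ProbabilityTheory Filter Topology Set

noncomputable section

/-- A restless bandit project: the model data (discount factor `β`, passive/active
Markov transition kernels `κ false`/`κ true`, reward `r` and resource consumption `c`),
Assumption 1 (the weighted sup-norm conditions for weight `w` and constants `M`, `γ`),
together with the threshold-policy performance metrics `F`, `G` (for `z`-policies,
active iff `x > z`), `Fm`, `Gm` (for `z⁻`-policies, active iff `x ≥ z`), and the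
optimal value function `V lam` of the `lam`-price problem, each of which is the
(unique) `w`-bounded measurable solution of its fixed-point equation. -/
structure Bandit where
  β : ℝ
  κ : Bool → Kernel ℝ ℝ
  r : ℝ → Bool → ℝ
  c : ℝ → Bool → ℝ
  w : ℝ → ℝ
  M : ℝ
  γ : ℝ
  F : ℝ → EReal → ℝ
  G : ℝ → EReal → ℝ
  Fm : ℝ → EReal → ℝ
  Gm : ℝ → EReal → ℝ
  V : ℝ → ℝ → ℝ
  hβ0 : 0 ≤ β
  hβ1 : β < 1
  hκ : ∀ a, IsMarkovKernel (κ a)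
  hr_cont : ∀ a, Continuous fun x => r x a
  hc_cont : ∀ a, Continuous fun x => c x a
  hc0 : ∀ x, 0 ≤ c x false
  hc01 : ∀ x, c x false < c x true
  hw_meas : Measurable w
  hw_one : ∀ x, 1 ≤ w x
  hM : 0 < M
  hβγ : β ≤ γ
  hγ1 : γ < 1
  hr_bd : ∀ x a, |r x a| ≤ M * w x
  hc_bd : ∀ x a, c x a ≤ M * w x
  hw_int : ∀ a x, Integrable w (κ a x)
  hw_drift : ∀ a x, β * ∫ y, w y ∂(κ a x) ≤ γ * w x
  hF_meas : ∀ z, Measurable fun x => F x z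
  hG_meas : ∀ z, Measurable fun x => G x z
  hFm_meas : ∀ z, Measurable fun x => Fm x z
  hGm_meas : ∀ z, Measurable fun x => Gm x z
  hV_meas : ∀ lam, Measurable (V lam)
  hF_bdd : ∀ z, ∃ C, ∀ x, |F x z| ≤ C * w x
  hG_bdd : ∀ z, ∃ C, ∀ x, |G x z| ≤ C * w x
  hFm_bdd : ∀ z, ∃ C, ∀ x, |Fm x z| ≤ C * w x
  hGm_bdd : ∀ z, ∃ C, ∀ x, |Gm x z| ≤ C * w x
  hV_bdd : ∀ lam, ∃ C, ∀ x, |V lam x| ≤ C * w x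
  hF_eq : ∀ x z, F x z =
    r x (decide (z < (x : EReal))) +
      β * ∫ y, F y z ∂(κ (decide (z < (x : EReal))) x)
  hG_eq : ∀ x z, G x z =
    c x (decide (z < (x : EReal))) +
      β * ∫ y, G y z ∂(κ (decide (z < (x : EReal))) x)
  hFm_eq : ∀ x z, Fm x z =
    r x (decide (z ≤ (x : EReal))) +
      β * ∫ y, Fm y z ∂(κ (decide (z ≤ (x : EReal))) x)
  hGm_eq : ∀ x z, Gm x z =
    c x (decide (z ≤ (x : EReal))) +
      β * ∫ y, Gm y z ∂(κ (decide (z ≤ (x : EReal))) x)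
  hV_eq : ∀ lam x, V lam x =
    max (r x false - lam * c x false + β * ∫ y, V lam y ∂(κ false x))
        (r x true - lam * c x true + β * ∫ y, V lam y ∂(κ true x))

/-- `ν` is the Lebesgue–Stieltjes measure of the (bounded nonincreasing
right-continuous) function `h`: `ν(z₁,z₂] = h z₁ - h z₂`. -/
def IsLSMeasureOfAnti (h : ℝ → ℝ) (ν : Measure ℝ) : Prop :=
  ∀ z₁ z₂ : ℝ, z₁ ≤ z₂ → ν (Set.Ioc z₁ z₂) = ENNReal.ofReal (h z₁ - h z₂)

/-- `ν` is the Lebesgue–Stieltjes measure of the (bounded nondecreasing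
right-continuous) function `h`: `ν(z₁,z₂] = h z₂ - h z₁`. -/
def IsLSMeasureOfMono (h : ℝ → ℝ) (ν : Measure ℝ) : Prop :=
  ∀ z₁ z₂ : ℝ, z₁ ≤ z₂ → ν (Set.Ioc z₁ z₂) = ENNReal.ofReal (h z₂ - h z₁)

/-- The real interval `(z₁, z₂] ⊆ ℝ` with extended-real endpoints. -/
def iocR (z₁ z₂ : EReal) : Set ℝ := {y : ℝ | z₁ < (y : EReal) ∧ (y : EReal) ≤ z₂}

/-- `t`-step distribution of the Markov chain with kernel `κ` and initial law `p`. -/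
def kerIter (κ : Kernel ℝ ℝ) : ℕ → Measure ℝ → Measure ℝ
  | 0, p => p
  | (t + 1), p => (kerIter κ t p).bind fun x => κ x

namespace Bandit

variable (P : Bandit)

/-- Marginal reward metric `f(x,z)` of the `z`-policy. -/
def f (x : ℝ) (z : EReal) : ℝ :=
  (P.r x true - P.r x false) +
    P.β * ((∫ y, P.F y z ∂(P.κ true x)) - ∫ y, P.F y z ∂(P.κ false x))

/-- Marginal resource metric `g(x,z)` of the `z`-policy. -/
def g (x : ℝ) (z : EReal) : ℝ :=
  (P.c x true - P.c x false) +
    P.β * ((∫ y, P.G y z ∂(P.κ true x)) - ∫ y, P.G y z ∂(P.κ false x))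

/-- Marginal reward metric `f(x,z⁻)` of the `z⁻`-policy. -/
def fm (x : ℝ) (z : EReal) : ℝ :=
  (P.r x true - P.r x false) +
    P.β * ((∫ y, P.Fm y z ∂(P.κ true x)) - ∫ y, P.Fm y z ∂(P.κ false x))

/-- Marginal resource metric `g(x,z⁻)` of the `z⁻`-policy. -/
def gm (x : ℝ) (z : EReal) : ℝ :=
  (P.c x true - P.c x false) +
    P.β * ((∫ y, P.Gm y z ∂(P.κ true x)) - ∫ y, P.Gm y z ∂(P.κ false x))

/-- Marginal productivity metric `m(x,z) = f(x,z)/g(x,z)`. -/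
def m (x : ℝ) (z : EReal) : ℝ := P.f x z / P.g x z

/-- Marginal productivity metric `m(x,z⁻) = f(x,z⁻)/g(x,z⁻)`. -/
def mm (x : ℝ) (z : EReal) : ℝ := P.fm x z / P.gm x z

/-- The marginal productivity (MP) index `m*(x) = m(x,x)`. -/
def mStar (x : ℝ) : ℝ := P.m x (x : EReal)

/-- The active action is `P_lam`-optimal at `x`. -/
def ActOpt (lam x : ℝ) : Prop :=
  P.r x false - lam * P.c x false + P.β * ∫ y, P.V lam y ∂(P.κ false x) ≤
    P.r x true - lam * P.c x true + P.β * ∫ y, P.V lam y ∂(P.κ true x)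

/-- The passive action is `P_lam`-optimal at `x`. -/
def PassOpt (lam x : ℝ) : Prop :=
  P.r x true - lam * P.c x true + P.β * ∫ y, P.V lam y ∂(P.κ true x) ≤
    P.r x false - lam * P.c x false + P.β * ∫ y, P.V lam y ∂(P.κ false x)

/-- The project is indexable with index `ν`. -/
def Indexable (ν : ℝ → ℝ) : Prop :=
  ∀ lam x, (P.ActOpt lam x ↔ lam ≤ ν x) ∧ (P.PassOpt lam x ↔ ν x ≤ lam)

/-- The `z`-policy is `P_lam`-optimal. -/
def ZPolicyOpt (z : EReal) (lam : ℝ) : Prop :=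
  ∀ x, P.F x z - lam * P.G x z = P.V lam x

/-- The `z⁻`-policy is `P_lam`-optimal. -/
def ZmPolicyOpt (z : EReal) (lam : ℝ) : Prop :=
  ∀ x, P.Fm x z - lam * P.Gm x z = P.V lam x

/-- The project is strongly threshold-indexable with index `ν`. -/
def StronglyThresholdIndexable (ν : ℝ → ℝ) : Prop :=
  P.Indexable ν ∧
    ∀ lam : ℝ, ∃ z : EReal, P.ZPolicyOpt z lam ∧ P.ZmPolicyOpt z lam

/-- PCL-indexability condition (PCLI1). -/
def PCLI1 : Prop := ∀ (x : ℝ) (z : EReal), 0 < P.g x z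

/-- PCL-indexability condition (PCLI2). -/
def PCLI2 : Prop :=
  Monotone P.mStar ∧ Continuous P.mStar ∧ BddBelow (Set.range P.mStar)

/-- PCL-indexability condition (PCLI3). -/
def PCLI3 : Prop :=
  ∀ x : ℝ, ∀ ν : Measure ℝ, IsLSMeasureOfAnti (fun z : ℝ => P.G x z) ν →
    ∀ z₁ z₂ : ℝ, z₁ < z₂ →
      P.F x z₂ - P.F x z₁ = -∫ z in Set.Ioc z₁ z₂, P.mStar z ∂ν

/-- The project is PCL-indexable. -/
def PCLIndexable : Prop := P.PCLI1 ∧ P.PCLI2 ∧ P.PCLI3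

/-- Reward metric with initial distribution `p`. -/
def Fp (p : Measure ℝ) (z : EReal) : ℝ := ∫ x, P.F x z ∂p

/-- Resource metric with initial distribution `p`. -/
def Gp (p : Measure ℝ) (z : EReal) : ℝ := ∫ x, P.G x z ∂p

/-- `z⁻`-policy reward metric with initial distribution `p`. -/
def Fmp (p : Measure ℝ) (z : EReal) : ℝ := ∫ x, P.Fm x z ∂p

/-- `z⁻`-policy resource metric with initial distribution `p`. -/
def Gmp (p : Measure ℝ) (z : EReal) : ℝ := ∫ x, P.Gm x z ∂p

/-- An admissible initial distribution: a probability measure with `∫ w dp < ∞`. -/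
def IsInitDist (p : Measure ℝ) : Prop :=
  IsProbabilityMeasure p ∧ Integrable P.w p

/-- The transition kernel of the `z`-policy (active iff `x > z`). -/
def thrKer (z : EReal) : Kernel ℝ ℝ :=
  haveI : DecidablePred (· ∈ {x : ℝ | z < (x : EReal)}) := Classical.decPred _
  Kernel.piecewise
    (show MeasurableSet {x : ℝ | z < (x : EReal)} from
      measurable_coe_real_ereal measurableSet_Ioi)
    (P.κ true) (P.κ false)

/-- The transition kernel of the `z⁻`-policy (active iff `x ≥ z`). -/
def thrKerM (z : EReal) : Kernel ℝ ℝ :=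
  haveI : DecidablePred (· ∈ {x : ℝ | z ≤ (x : EReal)}) := Classical.decPred _
  Kernel.piecewise
    (show MeasurableSet {x : ℝ | z ≤ (x : EReal)} from
      measurable_coe_real_ereal measurableSet_Ici)
    (P.κ true) (P.κ false)

/-- The (discounted) state occupation measure `μ_p^z` of the `z`-policy. -/
def occ (z : EReal) (p : Measure ℝ) : Measure ℝ :=
  Measure.sum fun t : ℕ => ENNReal.ofReal (P.β ^ t) • kerIter (P.thrKer z) t p

/-- The (discounted) state occupation measure `μ_p^{z⁻}` of the `z⁻`-policy. -/
def occM (z : EReal) (p : Measure ℝ) : Measure ℝ :=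
  Measure.sum fun t : ℕ => ENNReal.ofReal (P.β ^ t) • kerIter (P.thrKerM z) t p

end Bandit

/-- Finite-horizon reward metric `F_k(x,z)` (value iteration). -/
def Bandit.Fk (P : Bandit) : ℕ → ℝ → EReal → ℝ
  | 0, x, z => P.r x (decide (z < (x : EReal)))
  | (k + 1), x, z =>
      P.r x (decide (z < (x : EReal))) +
        P.β * ∫ y, Bandit.Fk P k y z ∂(P.κ (decide (z < (x : EReal))) x)

/-- Finite-horizon resource metric `G_k(x,z)` (value iteration). -/
def Bandit.Gk (P : Bandit) : ℕ → ℝ → EReal → ℝ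
  | 0, x, z => P.c x (decide (z < (x : EReal)))
  | (k + 1), x, z =>
      P.c x (decide (z < (x : EReal))) +
        P.β * ∫ y, Bandit.Gk P k y z ∂(P.κ (decide (z < (x : EReal))) x)

/-- Finite-horizon marginal reward metric `f_k(x,z)`. -/
def Bandit.fk (P : Bandit) : ℕ → ℝ → EReal → ℝ
  | 0, x, _ => P.r x true - P.r x false
  | (k + 1), x, z =>
      (P.r x true - P.r x false) +
        P.β * ((∫ y, P.Fk k y z ∂(P.κ true x)) - ∫ y, P.Fk k y z ∂(P.κ false x))

/-- Finite-horizon marginal resource metric `g_k(x,z)`. -/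
def Bandit.gk (P : Bandit) : ℕ → ℝ → EReal → ℝ
  | 0, x, _ => P.c x true - P.c x false
  | (k + 1), x, z =>
      (P.c x true - P.c x false) +
        P.β * ((∫ y, P.Gk k y z ∂(P.κ true x)) - ∫ y, P.Gk k y z ∂(P.κ false x))

namespace Bandit

variable (P : Bandit)

/-- Finite-horizon MP metric `m_k(x,z)`. -/
def mk' (k : ℕ) (x : ℝ) (z : EReal) : ℝ := P.fk k x z / P.gk k x z

/-- Finite-horizon MP index `m*_k(x)`. -/
def mkStar (k : ℕ) (x : ℝ) : ℝ := P.mk' k x (x : EReal)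

/-- `g̲(x,z) = inf_k g_k(x,z)`. -/
def gbar (x : ℝ) (z : EReal) : ℝ := ⨅ k : ℕ, P.gk k x z

end Bandit

/-!
Under (PCLI1) the resource metric `G(x, ·)` is nonincreasing, and it is right-continuous because
its right limit solves the same policy equation, whose `w`-bounded solutions are unique. Its
Lebesgue–Stieltjes measure `ν` therefore exists, and (PCLI3) together with a lower bound `b` of
`m*` gives `F(x, z₁) - F(x, z₂) = ∫_{(z₁, z₂]} m* dν ≥ b (G(x, z₁) - G(x, z₂))`. Hence
`F(x, ·) = (F(x, ·) - b G(x, ·)) + b G(x, ·)` is a combination of two nonincreasing functions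
bounded by a multiple of `w(x)`; integrating in `x` against `p` or `κᵃ(x, ·)` preserves this, and
bounded monotone functions have bounded variation.
-/

section BoundedVariation

variable {α E : Type*} [LinearOrder α] [SeminormedAddCommGroup E] {s : Set α}

theorem eVariationOn_le_add_of_edist_le {f g h : α → E}
    (hfgh : ∀ x ∈ s, ∀ y ∈ s, edist (h x) (h y) ≤ edist (f x) (f y) + edist (g x) (g y)) :
    eVariationOn h s ≤ eVariationOn f s + eVariationOn g s := by
  refine iSup_le fun ⟨n, u, hu, us⟩ => ?_
  calc ∑ i ∈ Finset.range n, edist (h (u (i + 1))) (h (u i))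
      ≤ ∑ i ∈ Finset.range n,
          (edist (f (u (i + 1))) (f (u i)) + edist (g (u (i + 1))) (g (u i))) :=
        Finset.sum_le_sum fun i _ => hfgh _ (us _) _ (us _)
    _ ≤ eVariationOn f s + eVariationOn g s := by
        rw [Finset.sum_add_distrib]
        exact add_le_add (eVariationOn.sum_le (f := f) hu us)
          (eVariationOn.sum_le (f := g) hu us)

theorem BoundedVariationOn.add {f g : α → E} (hf : BoundedVariationOn f s)
    (hg : BoundedVariationOn g s) : BoundedVariationOn (f + g) s :=
  ne_top_of_le_ne_top (ENNReal.add_ne_top.2 ⟨hf, hg⟩)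
    (eVariationOn_le_add_of_edist_le fun _ _ _ _ => edist_add_add_le _ _ _ _)

theorem BoundedVariationOn.sub {f g : α → E} (hf : BoundedVariationOn f s)
    (hg : BoundedVariationOn g s) : BoundedVariationOn (f - g) s :=
  ne_top_of_le_ne_top (ENNReal.add_ne_top.2 ⟨hf, hg⟩)
    (eVariationOn_le_add_of_edist_le fun x _ y _ => by
      simpa only [Pi.sub_apply, sub_eq_add_neg, edist_neg_neg] using
        edist_add_add_le (f x) (-g x) (f y) (-g y))

theorem boundedVariationOn_const (c : E) : BoundedVariationOn (fun _ : α => c) s := by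
  rw [BoundedVariationOn, eVariationOn.constant_on]
  · exact ENNReal.zero_ne_top
  · rintro _ ⟨_, _, rfl⟩ _ ⟨_, _, rfl⟩
    rfl

theorem BoundedVariationOn.const_smul {𝕜 : Type*} [SeminormedRing 𝕜] [Module 𝕜 E]
    [IsBoundedSMul 𝕜 E] {f : α → E} (hf : BoundedVariationOn f s) (c : 𝕜) :
    BoundedVariationOn (c • f) s :=
  (lipschitzWith_smul c).comp_boundedVariationOn hf

theorem AntitoneOn.boundedVariationOn {f : α → ℝ} {C : ℝ} (hf : AntitoneOn f s)
    (hC : ∀ x ∈ s, |f x| ≤ C) : BoundedVariationOn f s := by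
  have hneg : BoundedVariationOn (-f) s := hf.neg.boundedVariationOn (C := C) fun x hx => by
    simpa using hC x hx
  simpa only [neg_one_smul, neg_neg] using hneg.const_smul (-1 : ℝ)

end BoundedVariation

namespace Bandit

variable (P : Bandit)

theorem w_pos (x : ℝ) : 0 < P.w x := one_pos.trans_le (P.hw_one x)

theorem integrable_of_abs_le_mul_w {v : ℝ → ℝ} {C : ℝ} (hv : Measurable v)
    (hb : ∀ y, |v y| ≤ C * P.w y) {μ : Measure ℝ} (hw : Integrable P.w μ) : Integrable v μ :=
  (hw.const_mul C).mono' hv.aestronglyMeasurable (ae_of_all _ hb)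

theorem abs_integral_le_of_abs_le_mul_w {v : ℝ → ℝ} {C : ℝ} (hb : ∀ y, |v y| ≤ C * P.w y)
    {μ : Measure ℝ} (hw : Integrable P.w μ) : |∫ y, v y ∂μ| ≤ C * ∫ y, P.w y ∂μ := by
  rw [← integral_const_mul]
  exact norm_integral_le_of_norm_le (f := v) (hw.const_mul C) (ae_of_all _ hb)

theorem nonneg_of_integral_le (a : ℝ → Bool) {v : ℝ → ℝ} {C : ℝ} (hv : Measurable v)
    (hb : ∀ x, |v x| ≤ C * P.w x) (hsuper : ∀ x, P.β * ∫ y, v y ∂(P.κ (a x) x) ≤ v x)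
    (x : ℝ) : 0 ≤ v x := by
  have hC : 0 ≤ C := nonneg_of_mul_nonneg_left ((abs_nonneg _).trans (hb 0)) (P.w_pos 0)
  have hγ : 0 ≤ P.γ := P.hβ0.trans P.hβγ
  -- each step of the equation improves a lower bound `-D w ≤ v` to `-D γ w ≤ v`
  have hiter : ∀ n : ℕ, ∀ x, -(C * P.γ ^ n) * P.w x ≤ v x := by
    intro n
    induction n with
    | zero => intro x; simpa using neg_le_of_abs_le (hb x)
    | succ n ih =>
      intro x
      have hD : 0 ≤ C * P.γ ^ n := mul_nonneg hC (pow_nonneg hγ n)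
      have hint : -(C * P.γ ^ n) * ∫ y, P.w y ∂(P.κ (a x) x) ≤ ∫ y, v y ∂(P.κ (a x) x) := by
        rw [← integral_const_mul]
        exact integral_mono ((P.hw_int _ _).const_mul _)
          (P.integrable_of_abs_le_mul_w hv hb (P.hw_int _ _)) (ih ·)
      calc -(C * P.γ ^ (n + 1)) * P.w x = -(C * P.γ ^ n) * (P.γ * P.w x) := by ring
        _ ≤ -(C * P.γ ^ n) * (P.β * ∫ y, P.w y ∂(P.κ (a x) x)) :=
          mul_le_mul_of_nonpos_left (P.hw_drift _ x) (neg_nonpos.2 hD)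
        _ = P.β * (-(C * P.γ ^ n) * ∫ y, P.w y ∂(P.κ (a x) x)) := by ring
        _ ≤ P.β * ∫ y, v y ∂(P.κ (a x) x) := mul_le_mul_of_nonneg_left hint P.hβ0
        _ ≤ v x := hsuper x
  have hlim : Tendsto (fun n : ℕ => -(C * P.γ ^ n) * P.w x) atTop (𝓝 0) := by
    simpa using
      ((tendsto_pow_atTop_nhds_zero_of_lt_one hγ P.hγ1).const_mul C).neg.mul_const (P.w x)
  exact le_of_tendsto' hlim (hiter · x)

theorem eq_zero_of_eq_integral (a : ℝ → Bool) {v : ℝ → ℝ} {C : ℝ} (hv : Measurable v)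
    (hb : ∀ x, |v x| ≤ C * P.w x) (heq : ∀ x, v x = P.β * ∫ y, v y ∂(P.κ (a x) x))
    (x : ℝ) : v x = 0 := by
  have hpos := P.nonneg_of_integral_le a hv hb (fun x => (heq x).ge) x
  have hneg := P.nonneg_of_integral_le a hv.neg (v := -v) (by simpa using hb)
    (fun x => by simp [integral_neg, heq x]) x
  simp only [Pi.neg_apply, neg_nonneg] at hneg
  exact le_antisymm hneg hpos

theorem abs_le_of_eq_add_integral (a : ℝ → Bool) {v e : ℝ → ℝ} {C : ℝ} (hv : Measurable v)
    (hb : ∀ x, |v x| ≤ C * P.w x) (he : ∀ x, |e x| ≤ P.M * P.w x)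
    (heq : ∀ x, v x = e x + P.β * ∫ y, v y ∂(P.κ (a x) x)) (x : ℝ) :
    |v x| ≤ P.M / (1 - P.γ) * P.w x := by
  set K := P.M / (1 - P.γ)
  have hK : P.M + P.γ * K = K := by
    simp only [K]
    field_simp [(sub_pos.2 P.hγ1).ne']
    ring
  have hKnn : 0 ≤ K := div_nonneg P.hM.le (sub_pos.2 P.hγ1).le
  -- `K w ∓ v` are `w`-bounded supersolutions because `K w` dominates `|e| + β ∫ K w`
  have hsuper : ∀ σ : ℝ, |σ| = 1 → ∀ x, 0 ≤ K * P.w x - σ * v x := by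
    intro σ hσ
    refine P.nonneg_of_integral_le a (C := K + C) ((P.hw_meas.const_mul K).sub
      (hv.const_mul σ)) (fun x => ?_) (fun x => ?_)
    · calc |K * P.w x - σ * v x| ≤ |K * P.w x| + |σ * v x| := abs_sub _ _
        _ = K * P.w x + |v x| := by rw [abs_mul, abs_mul, hσ, one_mul, abs_of_nonneg hKnn,
              abs_of_pos (P.w_pos x)]
        _ ≤ (K + C) * P.w x := by linarith [hb x]
    · have hvi := P.integrable_of_abs_le_mul_w hv hb (P.hw_int (a x) x)
      rw [integral_sub ((P.hw_int _ _).const_mul K) (hvi.const_mul σ), integral_const_mul,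
        integral_const_mul, heq x]
      have hdrift := mul_le_mul_of_nonneg_left (P.hw_drift (a x) x) hKnn
      have hσe : σ * e x ≤ P.M * P.w x := (le_abs_self _).trans (by
        rw [abs_mul, hσ, one_mul]; exact he x)
      have hKw : P.M * P.w x + P.γ * K * P.w x = K * P.w x := by rw [← add_mul, hK]
      linarith
  rw [abs_le]
  constructor
  · linarith [hsuper (-1) (by norm_num) x]
  · linarith [hsuper 1 (by norm_num) x]


theorem abs_F_le (z : EReal) (x : ℝ) : |P.F x z| ≤ P.M / (1 - P.γ) * P.w x :=
  have ⟨_, hC⟩ := P.hF_bdd z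
  P.abs_le_of_eq_add_integral _ (P.hF_meas z) hC (fun x => P.hr_bd x _) (P.hF_eq · z) x

theorem abs_G_le (z : EReal) (x : ℝ) : |P.G x z| ≤ P.M / (1 - P.γ) * P.w x :=
  have ⟨_, hC⟩ := P.hG_bdd z
  have hc : ∀ x a, |P.c x a| ≤ P.M * P.w x := fun x a => by
    have hc0 : 0 ≤ P.c x a := by
      cases a
      · exact P.hc0 x
      · exact (P.hc0 x).trans (P.hc01 x).le
    rw [abs_of_nonneg hc0]
    exact P.hc_bd x a
  P.abs_le_of_eq_add_integral _ (P.hG_meas z) hC (fun x => hc x _) (P.hG_eq · z) x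

theorem integrable_G (z : EReal) {μ : Measure ℝ} (hμ : Integrable P.w μ) :
    Integrable (fun y => P.G y z) μ :=
  P.integrable_of_abs_le_mul_w (P.hG_meas z) (P.abs_G_le z) hμ

theorem integrable_F (z : EReal) {μ : Measure ℝ} (hμ : Integrable P.w μ) :
    Integrable (fun y => P.F y z) μ :=
  P.integrable_of_abs_le_mul_w (P.hF_meas z) (P.abs_F_le z) hμ

theorem G_eq_of_le {x : ℝ} {z : EReal} (h : (x : EReal) ≤ z) :
    P.G x z = P.c x false + P.β * ∫ y, P.G y z ∂(P.κ false x) := by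
  simpa [not_lt.2 h] using P.hG_eq x z

theorem G_eq_of_lt {x : ℝ} {z : EReal} (h : z < x) :
    P.G x z = P.c x true + P.β * ∫ y, P.G y z ∂(P.κ true x) := by
  simpa [h] using P.hG_eq x z

theorem abs_G_sub_G_le (z₁ z₂ : EReal) (x : ℝ) :
    |P.G x z₁ - P.G x z₂| ≤ 2 * (P.M / (1 - P.γ)) * P.w x :=
  (abs_sub _ _).trans (by linarith [P.abs_G_le z₁ x, P.abs_G_le z₂ x])

/-- Raising the threshold can only lower the resource metric: on the states where the two
policies differ, the excess of `G(·, z₁)` over its one-step propagation is `g(·, z₂) > 0`. -/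
theorem G_antitone (h1 : P.PCLI1) (x : ℝ) : Antitone fun z : ℝ => P.G x z := by
  intro z₁ z₂ hz
  refine sub_nonneg.1 (P.nonneg_of_integral_le (fun y => decide ((z₁ : EReal) < y))
    ((P.hG_meas _).sub (P.hG_meas _)) (P.abs_G_sub_G_le z₁ z₂) (fun y => ?_) x)
  have hsub : ∀ a, ∫ y', (P.G y' z₁ - P.G y' z₂) ∂(P.κ a y) =
      (∫ y', P.G y' z₁ ∂(P.κ a y)) - ∫ y', P.G y' z₂ ∂(P.κ a y) := fun a =>
    integral_sub (P.integrable_G _ (P.hw_int a y)) (P.integrable_G _ (P.hw_int a y))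
  rcases le_or_gt y z₁ with hy₁ | hy₁
  · have e₁ := P.G_eq_of_le (EReal.coe_le_coe_iff.2 hy₁)
    have e₂ := P.G_eq_of_le (EReal.coe_le_coe_iff.2 (hy₁.trans hz))
    simp only [Pi.sub_apply, EReal.coe_lt_coe_iff, not_lt.2 hy₁, decide_false, hsub]
    linarith
  · have e₁ := P.G_eq_of_lt (EReal.coe_lt_coe_iff.2 hy₁)
    simp only [Pi.sub_apply, EReal.coe_lt_coe_iff, hy₁, decide_true, hsub]
    rcases le_or_gt y z₂ with hy₂ | hy₂
    · have e₂ := P.G_eq_of_le (EReal.coe_le_coe_iff.2 hy₂)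
      have hg := h1 y z₂
      rw [Bandit.g] at hg
      linarith
    · have e₂ := P.G_eq_of_lt (EReal.coe_lt_coe_iff.2 hy₂)
      linarith

/-- The right limit `L = G(·, a+)`, which exists by monotonicity, solves the same policy
equation as `G(·, a)` (dominated convergence), so the two coincide. -/
theorem G_continuousWithinAt_Ici (h1 : P.PCLI1) (x a : ℝ) :
    ContinuousWithinAt (fun z : ℝ => P.G x z) (Ici a) a := by
  set L : ℝ → ℝ := fun y => sSup ((fun z : ℝ => P.G y z) '' Ioi a)
  set act : ℝ → Bool := fun y => decide ((a : EReal) < y)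
  have hL : ∀ y, Tendsto (fun z : ℝ => P.G y z) (𝓝[>] a) (𝓝 (L y)) := fun y =>
    (P.G_antitone h1 y).tendsto_nhdsGT a
  have hL_meas : Measurable L :=
    measurable_of_tendsto_metrizable' (𝓝[>] a) (fun z => P.hG_meas z) (tendsto_pi_nhds.2 hL)
  have hL_bdd : ∀ y, |L y| ≤ P.M / (1 - P.γ) * P.w y := fun y =>
    le_of_tendsto' (hL y).abs fun z => P.abs_G_le z y
  have hact : ∀ y : ℝ, ∀ᶠ z in 𝓝[>] a, decide (((z : ℝ) : EReal) < y) = act y := by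
    intro y
    by_cases hay : a < y
    · filter_upwards [Ioo_mem_nhdsGT hay] with z hz
      simp [act, hz.2, hay]
    · filter_upwards [self_mem_nhdsWithin] with z (hz : a < z)
      simp [act, hay, (not_lt.1 hay).trans hz.le]
  have hL_eq : ∀ y, L y = P.c y (act y) + P.β * ∫ y', L y' ∂(P.κ (act y) y) := by
    intro y
    have hint : Tendsto (fun z : ℝ => ∫ y', P.G y' z ∂(P.κ (act y) y)) (𝓝[>] a)
        (𝓝 (∫ y', L y' ∂(P.κ (act y) y))) :=
      tendsto_integral_filter_of_dominated_convergence _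
        (.of_forall fun z => (P.hG_meas z).aestronglyMeasurable)
        (.of_forall fun z => ae_of_all _ (P.abs_G_le z)) ((P.hw_int _ _).const_mul _)
        (ae_of_all _ hL)
    refine tendsto_nhds_unique (hL y) ((tendsto_const_nhds.add (hint.const_mul P.β)).congr' ?_)
    filter_upwards [hact y] with z hz
    rw [P.hG_eq y z, hz]
  have hL_sub : ∀ y, L y - P.G y a = 0 := by
    refine P.eq_zero_of_eq_integral act (hL_meas.sub (P.hG_meas a))
      (C := 2 * (P.M / (1 - P.γ)))
      (fun y => (abs_sub _ _).trans (by linarith [hL_bdd y, P.abs_G_le a y])) (fun y => ?_)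
    rw [integral_sub ((P.integrable_of_abs_le_mul_w hL_meas hL_bdd (P.hw_int _ _)))
      (P.integrable_G a (P.hw_int _ _)), hL_eq y, P.hG_eq y a]
    ring
  rw [← continuousWithinAt_Ioi_iff_Ici, ContinuousWithinAt, ← sub_eq_zero.1 (hL_sub x)]
  exact hL x

theorem exists_isLSMeasureOfAnti_G (h1 : P.PCLI1) (x : ℝ) :
    ∃ ν : Measure ℝ, IsLocallyFiniteMeasure ν ∧ IsLSMeasureOfAnti (fun z : ℝ => P.G x z) ν := by
  let g : StieltjesFunction ℝ :=
    ⟨fun z => -P.G x z, fun _ _ h => neg_le_neg (P.G_antitone h1 x h),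
      fun a => (P.G_continuousWithinAt_Ici h1 x a).neg⟩
  refine ⟨g.measure, inferInstance, fun z₁ z₂ _ => ?_⟩
  rw [g.measure_Ioc, neg_sub_neg]

/-- By (PCLI3), `F(x, z₁) - F(x, z₂) = ∫_{(z₁, z₂]} m* dν ≥ b ν(z₁, z₂]`, and
`ν(z₁, z₂] = G(x, z₁) - G(x, z₂)`. -/
theorem F_sub_mul_G_antitone (h : P.PCLIndexable) {b : ℝ} (hb : ∀ z, b ≤ P.mStar z)
    (x : ℝ) : Antitone fun z : ℝ => P.F x z - b * P.G x z := by
  obtain ⟨h1, ⟨-, hm_cont, -⟩, h3⟩ := h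
  obtain ⟨ν, _, hν⟩ := P.exists_isLSMeasureOfAnti_G h1 x
  intro z₁ z₂ hz
  rcases hz.eq_or_lt with rfl | hlt
  · rfl
  have hν_real : ν.real (Ioc z₁ z₂) = P.G x z₁ - P.G x z₂ := by
    rw [measureReal_def, hν z₁ z₂ hz,
      ENNReal.toReal_ofReal (sub_nonneg.2 (P.G_antitone h1 x hz))]
  have hlower : b * ν.real (Ioc z₁ z₂) ≤ ∫ z in Ioc z₁ z₂, P.mStar z ∂ν :=
    setIntegral_ge_of_const_le_real measurableSet_Ioc (by simp [hν z₁ z₂ hz])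
      (fun z _ => hb z) (hm_cont.integrableOn_Icc.mono_set Ioc_subset_Icc_self)
  have hF := h3 x ν hν z₁ z₂ hlt
  rw [hν_real] at hlower
  linarith

theorem boundedVariationOn_integral_F (h : P.PCLIndexable) {q : Measure ℝ}
    (hq : Integrable P.w q) : BoundedVariationOn (fun z : ℝ => ∫ y, P.F y z ∂q) univ := by
  obtain ⟨b, hb⟩ := h.2.1.2.2
  set K := P.M / (1 - P.γ)
  have hsplit : (fun z : ℝ => ∫ y, P.F y z ∂q) =
      (fun z : ℝ => ∫ y, (P.F y z - b * P.G y z) ∂q) + b • fun z : ℝ => ∫ y, P.G y z ∂q := by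
    ext z
    simp only [Pi.add_apply, Pi.smul_apply, smul_eq_mul]
    rw [integral_sub (P.integrable_F z hq) ((P.integrable_G z hq).const_mul b),
      integral_const_mul]
    ring
  have hFG : Antitone fun z : ℝ => ∫ y, (P.F y z - b * P.G y z) ∂q := fun z₁ z₂ hz =>
    integral_mono ((P.integrable_F _ hq).sub ((P.integrable_G _ hq).const_mul b))
      ((P.integrable_F _ hq).sub ((P.integrable_G _ hq).const_mul b))
      fun y => P.F_sub_mul_G_antitone h (fun z => hb ⟨z, rfl⟩) y hz
  have hG : Antitone fun z : ℝ => ∫ y, P.G y z ∂q := fun z₁ z₂ hz =>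
    integral_mono (P.integrable_G _ hq) (P.integrable_G _ hq) fun y => P.G_antitone h.1 y hz
  have hFG_bdd : ∀ z : ℝ, |∫ y, (P.F y z - b * P.G y z) ∂q| ≤
      (1 + |b|) * K * ∫ y, P.w y ∂q := fun z =>
    P.abs_integral_le_of_abs_le_mul_w (fun y => by
      calc |P.F y z - b * P.G y z| ≤ |P.F y z| + |b| * |P.G y z| := by
            rw [← abs_mul]; exact abs_sub _ _
        _ ≤ K * P.w y + |b| * (K * P.w y) :=
            add_le_add (P.abs_F_le z y) (mul_le_mul_of_nonneg_left (P.abs_G_le z y) (abs_nonneg b))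
        _ = (1 + |b|) * K * P.w y := by ring) hq
  have hG_bdd : ∀ z : ℝ, |∫ y, P.G y z ∂q| ≤ K * ∫ y, P.w y ∂q := fun z =>
    P.abs_integral_le_of_abs_le_mul_w (P.abs_G_le z) hq
  rw [hsplit]
  exact ((hFG.antitoneOn univ).boundedVariationOn fun z _ => hFG_bdd z).add
    (((hG.antitoneOn univ).boundedVariationOn fun z _ => hG_bdd z).const_smul b)

end Bandit

/-- Under PCL-indexability, the reward metrics `F(p,·)` and `f(x,·)` have
bounded variation on `ℝ`. -/
theorem reward_metrics_boundedVariation (P : Bandit) (h : P.PCLIndexable) :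
    (∀ p : Measure ℝ, P.IsInitDist p →
      BoundedVariationOn (fun z : ℝ => P.Fp p z) Set.univ) ∧
    (∀ x : ℝ, BoundedVariationOn (fun z : ℝ => P.f x z) Set.univ) := by
  refine ⟨fun p hp => P.boundedVariationOn_integral_F h hp.2, fun x => ?_⟩
  have hf : (fun z : ℝ => P.f x z) = (fun _ => P.r x true - P.r x false) +
      P.β • ((fun z : ℝ => ∫ y, P.F y z ∂(P.κ true x)) -
        fun z : ℝ => ∫ y, P.F y z ∂(P.κ false x)) := rfl
  rw [hf]
  exact (boundedVariationOn_const _).add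
    (((P.boundedVariationOn_integral_F h (P.hw_int true x)).sub
      (P.boundedVariationOn_integral_F h (P.hw_int false x))).const_smul P.β)
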